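/- Let L be a negative definite lattice with basis {E_v} coming from a connected plumbing graph, and L' its dual lattice with dual basis E*_v defined by (E*_v, E_w) = -δ_{vw}. Then every E*_u, written in the basis {E_v} over ℚ, has all coordinates strictly positive. -/

import Mathlib

/-!
Off-diagonal entries of the form are nonnegative, so for the negative part `n = x⁻` of a vector
`x` with `B x e_w ≤ 0` for all `w` one gets `B x n ≤ 0 ≤ B x⁺ n`, the diagonal terms of the
latter vanishing because `x⁺` and `x⁻` have disjoint supports. Hence `B n n ≥ 0`, so `n = 0` by
negative definiteness, i.e. `x ≥ 0`. If some coordinate of `x = E*_u` vanished, connectedness would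
give `a` with `x a > 0` adjacent to `b` with `x b = 0`, and then `B x e_b ≥ x a B(e_a, e_b) > 0`.
-/

theorem posPart_mul_negPart_eq_zero {R : Type*} [Ring R] [LinearOrder R] [IsOrderedRing R]
    (a : R) : a⁺ * a⁻ = 0 := by
  rcases le_total a 0 with h | h
  · rw [posPart_eq_zero.mpr h, zero_mul]
  · rw [negPart_eq_zero.mpr h, mul_zero]

namespace LinearMap.BilinForm

variable {R ι : Type*} [CommRing R] [Fintype ι] [DecidableEq ι]
  (B : LinearMap.BilinForm R (ι → R))

theorem apply_eq_sum_sum_single (x y : ι → R) :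
    B x y = ∑ i, ∑ j, x i * B (Pi.single i 1) (Pi.single j 1) * y j := by
  conv_lhs => rw [← Matrix.toBilin'_toMatrix' B]
  simp only [Matrix.toBilin'_apply, toMatrix'_apply]

theorem apply_eq_sum_single_left (x y : ι → R) :
    B x y = ∑ i, x i * B (Pi.single i 1) y := by
  conv_lhs => rw [← Finset.univ_sum_single x]
  simp only [map_sum, LinearMap.sum_apply]
  refine Finset.sum_congr rfl fun i _ => ?_
  rw [← smul_eq_mul, ← LinearMap.smul_apply, ← map_smul, ← Pi.single_smul, smul_eq_mul, mul_one]

theorem apply_eq_sum_single_right (x y : ι → R) :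
    B x y = ∑ j, B x (Pi.single j 1) * y j := by
  conv_lhs => rw [← Finset.univ_sum_single y]
  simp only [map_sum]
  refine Finset.sum_congr rfl fun j _ => ?_
  rw [mul_comm, ← smul_eq_mul, ← map_smul, ← Pi.single_smul, smul_eq_mul, mul_one]

variable [LinearOrder R] [IsStrictOrderedRing R] {B}

theorem nonneg_of_apply_single_nonpos (hneg : ∀ x, x ≠ 0 → B x x < 0)
    (hoff : ∀ v w, v ≠ w → 0 ≤ B (Pi.single v 1) (Pi.single w 1)) {x : ι → R}
    (hx : ∀ w, B x (Pi.single w 1) ≤ 0) : 0 ≤ x := by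
  have hxn : B x x⁻ ≤ 0 := by
    rw [apply_eq_sum_single_right]
    exact Finset.sum_nonpos fun w _ => mul_nonpos_of_nonpos_of_nonneg (hx w) (negPart_nonneg x w)
  have hposn : 0 ≤ B x⁺ x⁻ := by
    rw [apply_eq_sum_sum_single]
    refine Finset.sum_nonneg fun v _ => Finset.sum_nonneg fun w _ => ?_
    rcases eq_or_ne v w with rfl | hvw
    · rw [mul_right_comm, Pi.posPart_apply, Pi.negPart_apply, posPart_mul_negPart_eq_zero,
        zero_mul]
    · exact mul_nonneg (mul_nonneg (posPart_nonneg x v) (hoff v w hvw)) (negPart_nonneg x w)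
  rw [sub_eq_iff_eq_add.mp (posPart_sub_negPart x), map_add, LinearMap.add_apply] at hposn
  have hx_neg : x⁻ = 0 := by
    by_contra h
    linarith [hneg _ h]
  exact negPart_eq_zero.mp hx_neg

theorem pos_of_nonneg_of_connected
    (hoff : ∀ v w, v ≠ w → 0 ≤ B (Pi.single v 1) (Pi.single w 1))
    (hconn : ∀ S : Set ι, S.Nonempty → S ≠ Set.univ →
      ∃ u ∈ S, ∃ v, v ∉ S ∧ 0 < B (Pi.single u 1) (Pi.single v 1))
    {x : ι → R} (hx0 : 0 ≤ x) (hx : x ≠ 0) (hxB : ∀ w, B x (Pi.single w 1) ≤ 0) (v : ι) :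
    0 < x v := by
  by_contra hv
  have hSne : {w | 0 < x w}.Nonempty := by
    obtain ⟨w, hw⟩ := Function.ne_iff.mp hx
    exact ⟨w, (hx0 w).lt_of_ne' hw⟩
  have hSuniv : {w | 0 < x w} ≠ Set.univ := fun h => hv (Set.eq_univ_iff_forall.mp h v)
  obtain ⟨a, ha, b, hb, hab⟩ := hconn _ hSne hSuniv
  have hxb : x b = 0 := le_antisymm (not_lt.mp hb) (hx0 b)
  have hterm : x a * B (Pi.single a 1) (Pi.single b 1) ≤ B x (Pi.single b 1) := by
    rw [apply_eq_sum_single_left B x]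
    refine Finset.single_le_sum (f := fun w => x w * B (Pi.single w 1) (Pi.single b 1))
      (fun w _ => ?_) (Finset.mem_univ a)
    rcases eq_or_ne w b with rfl | hwb
    · rw [hxb, zero_mul]
    · exact mul_nonneg (hx0 w) (hoff w b hwb)
  linarith [mul_pos ha hab, hxB b]

end LinearMap.BilinForm

theorem stmt3_general {ι : Type*} [Fintype ι] [DecidableEq ι]
    (B : LinearMap.BilinForm ℚ (ι → ℚ))
    (hneg : ∀ x : ι → ℚ, x ≠ 0 → B x x < 0)
    (hoff : ∀ u v : ι, u ≠ v →
      B (Pi.single u 1) (Pi.single v 1) = 0 ∨ B (Pi.single u 1) (Pi.single v 1) = 1)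
    (hconn : ∀ S : Set ι, S.Nonempty → S ≠ Set.univ →
      ∃ u ∈ S, ∃ v, v ∉ S ∧ 0 < B (Pi.single u 1) (Pi.single v 1))
    (u : ι) (x : ι → ℚ)
    (hx : ∀ w : ι, B x (Pi.single w 1) = if w = u then -1 else 0) :
    ∀ v, 0 < x v := by
  have hoff_nonneg : ∀ v w, v ≠ w → 0 ≤ B (Pi.single v 1) (Pi.single w 1) := by
    intro v w hvw
    rcases hoff v w hvw with h | h <;> simp [h]
  have hxB : ∀ w, B x (Pi.single w 1) ≤ 0 := fun w => by
    rw [hx]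
    split_ifs <;> norm_num
  have hx_ne : x ≠ 0 := by
    rintro rfl
    simpa using hx u
  exact B.pos_of_nonneg_of_connected hoff_nonneg hconn
    (B.nonneg_of_apply_single_nonpos hneg hoff_nonneg hxB) hx_ne hxB

/-- every dual basis element E*_u, defined by (E*_u, E_w) = -δ_{uw},
has all coordinates strictly positive in the basis {E_v}. -/
theorem stmt3 {ι : Type*} [Fintype ι] [DecidableEq ι] [Nonempty ι]
    (B : LinearMap.BilinForm ℚ (ι → ℚ))
    (hsymm : ∀ x y, B x y = B y x)
    (hneg : ∀ x : ι → ℚ, x ≠ 0 → B x x < 0)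
    (hoff : ∀ u v : ι, u ≠ v →
      B (Pi.single u 1) (Pi.single v 1) = 0 ∨ B (Pi.single u 1) (Pi.single v 1) = 1)
    (hconn : ∀ S : Set ι, S.Nonempty → S ≠ Set.univ →
      ∃ u ∈ S, ∃ v, v ∉ S ∧ 0 < B (Pi.single u 1) (Pi.single v 1))
    (u : ι) (x : ι → ℚ)
    (hx : ∀ w : ι, B x (Pi.single w 1) = if w = u then -1 else 0) :
    ∀ v, 0 < x v :=
  stmt3_general B hneg hoff hconn u x hx
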